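/- If G is connected and the unitary connection is nontrivial — i.e. there exists a cycle C in G with e^{iθ_C} ≠ 1, where θ_C = Σ_{e ∈ C} θ_e — then the magnetic Laplacian L has trivial kernel: L f = 0 implies f = 0, so L is positive definite. -/

import Mathlib

open scoped ComplexOrder Matrix

/-!
Common definitions: finite weighted undirected graphs with a unitary connection
(each edge carries a fixed orientation and an angle θ_e, with θ changing sign
under orientation reversal), the magnetic Laplacian, rooted multi-type spanning
forests (MTSFs), the MTSF measure, and the smoothing estimators.
-/

attribute [local instance] Classical.propDecidable

universe u

/-- A finite weighted undirected graph with a unitary connection. Each undirected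
edge is recorded with one fixed orientation as an ordered pair, together with a
positive weight and a connection angle `θ` for that orientation. -/
structure MagGraph (V : Type u) where
  edges : Finset (V × V)
  noLoops : ∀ e ∈ edges, e.1 ≠ e.2
  oneOrient : ∀ e ∈ edges, (e.2, e.1) ∉ edges
  w : V × V → ℝ
  wPos : ∀ e ∈ edges, 0 < w e
  θ : V × V → ℝ

variable {V : Type u}

/-- Symmetrized weight: `wSym u v` is the weight of the edge between `u` and `v`
(in either orientation), and `0` if there is no such edge. -/
noncomputable def MagGraph.wSym (G : MagGraph V) (u v : V) : ℝ :=
  if (u, v) ∈ G.edges then G.w (u, v)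
  else if (v, u) ∈ G.edges then G.w (v, u) else 0

/-- The connection angle from `u` to `v`; it changes sign under orientation
reversal, and is `0` if there is no edge between `u` and `v`. -/
noncomputable def MagGraph.θSym (G : MagGraph V) (u v : V) : ℝ :=
  if (u, v) ∈ G.edges then G.θ (u, v)
  else if (v, u) ∈ G.edges then -G.θ (v, u) else 0

/-- The magnetic Laplacian `L`: `L v v = Σ_{e incident to v} w_e` and
`L v' v = - w_e exp(i θ_{v,v'})` for an edge `e` between `v` and `v'`, `0` otherwise. -/
noncomputable def magLap [Fintype V] [DecidableEq V] (G : MagGraph V) : Matrix V V ℂ :=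
  Matrix.of fun u v =>
    if u = v then (∑ x : V, ((G.wSym u x : ℝ) : ℂ))
    else -((G.wSym u v : ℝ) : ℂ) * Complex.exp (Complex.I * ((G.θSym v u : ℝ) : ℂ))

/-- The spanning subgraph of the vertex set determined by a set of (oriented) edges. -/
def subgraphOf (φE : Finset (V × V)) : SimpleGraph V where
  Adj u v := u ≠ v ∧ ((u, v) ∈ φE ∨ (v, u) ∈ φE)
  symm := ⟨fun u v h => ⟨h.1.symm, h.2.symm⟩⟩
  loopless := ⟨fun v h => h.1 rfl⟩

/-- The vertex set of the connected component of `v` in `H`. -/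
noncomputable def compFinset [Fintype V] (H : SimpleGraph V) (v : V) : Finset V :=
  Finset.univ.filter fun u => H.Reachable v u

/-- The sum of the connection angles along a walk. -/
noncomputable def walkθ (G : MagGraph V) {H : SimpleGraph V} {a b : V} (p : H.Walk a b) : ℝ :=
  (p.darts.map fun d => G.θSym d.toProd.1 d.toProd.2).sum

/-- `ψ_{a→b}`: the product of the connection phases `exp(i θ_e)` along a path from
`a` to `b` in `H` (in a forest component this path is unique); `0` if no path exists. -/
noncomputable def psi (G : MagGraph V) (H : SimpleGraph V) (a b : V) : ℂ :=
  if h : ∃ p : H.Walk a b, p.IsPath then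
    Complex.exp (Complex.I * ((walkθ G h.choose : ℝ) : ℂ))
  else 0

/-- The connected component of `v` in `H` contains no cycle. -/
def compAcyclic (H : SimpleGraph V) (v : V) : Prop :=
  ∀ u : V, H.Reachable v u → ∀ c : H.Walk u u, ¬ c.IsCycle

/-- The connected component of `v` in `H` contains exactly one cycle
(cycles being identified with their edge sets). -/
def uniqueCycleComp [DecidableEq V] (H : SimpleGraph V) (v : V) : Prop :=
  (∃ u : V, H.Reachable v u ∧ ∃ c : H.Walk u u, c.IsCycle) ∧
    ∀ (u u' : V) (c : H.Walk u u) (c' : H.Walk u' u'),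
      H.Reachable v u → H.Reachable v u' → c.IsCycle → c'.IsCycle →
        c.edges.toFinset = c'.edges.toFinset

/-- `(φE, R)` is a rooted multi-type spanning forest of `G`: every connected
component of the spanning subgraph `(V, φE)` is either a tree containing exactly one
root from `R`, or a unicycle (connected with exactly one cycle) containing no root. -/
def IsMTSF [Fintype V] [DecidableEq V] (G : MagGraph V) (φE : Finset (V × V))
    (R : Finset V) : Prop :=
  φE ⊆ G.edges ∧
    ∀ v : V,
      (compAcyclic (subgraphOf φE) v ∧ (compFinset (subgraphOf φE) v ∩ R).card = 1) ∨
      (uniqueCycleComp (subgraphOf φE) v ∧ compFinset (subgraphOf φE) v ∩ R = ∅)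

/-- The edge sets of the cycles of `H`. -/
def cycleSets [DecidableEq V] (H : SimpleGraph V) : Set (Finset (Sym2 V)) :=
  {s | ∃ (u : V) (c : H.Walk u u), c.IsCycle ∧ c.edges.toFinset = s}

/-- The total connection angle `θ_C` of the cycle of `H` with edge set `s`
(well defined up to sign, so that `cos θ_C` is well defined); `0` if there is no such cycle. -/
noncomputable def θofSet [DecidableEq V] (G : MagGraph V) (H : SimpleGraph V)
    (s : Finset (Sym2 V)) : ℝ :=
  if h : ∃ p : (u : V) × H.Walk u u, p.2.IsCycle ∧ p.2.edges.toFinset = s then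
    walkθ G h.choose.2
  else 0

/-- The (unnormalized) MTSF weight
`∏_{r ∈ R} q_r ⬝ ∏_{e ∈ φE} w_e ⬝ ∏_C (2 - 2 cos θ_C)`,
the last product running over the cycles of the subgraph `(V, φE)`. -/
noncomputable def mtsfWeight [Fintype V] [DecidableEq V] (G : MagGraph V) (q : V → ℝ)
    (φE : Finset (V × V)) (R : Finset V) : ℝ :=
  (∏ r ∈ R, q r) * (∏ e ∈ φE, G.w e) *
    ∏ s ∈ (Set.toFinite (cycleSets (subgraphOf φE))).toFinset,
      (2 - 2 * Real.cos (θofSet G (subgraphOf φE) s))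

/-- All rooted multi-type spanning forests of `G`, as pairs (edge set, root set). -/
noncomputable def mtsfs [Fintype V] [DecidableEq V] (G : MagGraph V) :
    Finset (Finset (V × V) × Finset V) :=
  Finset.univ.filter fun p => IsMTSF G p.1 p.2

/-- The normalizing constant of the MTSF measure. -/
noncomputable def mtsfZ [Fintype V] [DecidableEq V] (G : MagGraph V) (q : V → ℝ) : ℝ :=
  ∑ p ∈ mtsfs G, mtsfWeight G q p.1 p.2

/-- The probability of a rooted MTSF under the MTSF measure. -/
noncomputable def mtsfProb [Fintype V] [DecidableEq V] (G : MagGraph V) (q : V → ℝ)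
    (p : Finset (V × V) × Finset V) : ℝ :=
  mtsfWeight G q p.1 p.2 / mtsfZ G q

/-- Expectation of a complex-valued statistic of the random rooted MTSF. -/
noncomputable def mtsfExp [Fintype V] [DecidableEq V] (G : MagGraph V) (q : V → ℝ)
    (X : Finset (V × V) × Finset V → ℂ) : ℂ :=
  ∑ p ∈ mtsfs G, ((mtsfProb G q p : ℝ) : ℂ) * X p

/-- Variance `E|X - E X|²` of a complex-valued statistic of the random rooted MTSF. -/
noncomputable def mtsfVar [Fintype V] [DecidableEq V] (G : MagGraph V) (q : V → ℝ)
    (X : Finset (V × V) × Finset V → ℂ) : ℝ :=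
  ∑ p ∈ mtsfs G, mtsfProb G q p * Complex.normSq (X p - mtsfExp G q X)

/-- The root sets `R` compatible with a given edge set `π` (the fiber of the
conditioning `φ_• = π`). -/
noncomputable def rootSets [Fintype V] [DecidableEq V] (G : MagGraph V)
    (π : Finset (V × V)) : Finset (Finset V) :=
  Finset.univ.filter fun R => IsMTSF G π R

/-- Conditional expectation of a statistic of the roots given the edge set `π`. -/
noncomputable def mtsfCondExp [Fintype V] [DecidableEq V] (G : MagGraph V) (q : V → ℝ)
    (π : Finset (V × V)) (X : Finset V → ℂ) : ℂ :=
  (∑ R ∈ rootSets G π, ((mtsfWeight G q π R : ℝ) : ℂ) * X R) /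
    ((∑ R ∈ rootSets G π, mtsfWeight G q π R : ℝ) : ℂ)

/-- Conditional variance of a statistic of the roots given the edge set `π`. -/
noncomputable def mtsfCondVar [Fintype V] [DecidableEq V] (G : MagGraph V) (q : V → ℝ)
    (π : Finset (V × V)) (X : Finset V → ℂ) : ℝ :=
  (∑ R ∈ rootSets G π, mtsfWeight G q π R * Complex.normSq (X R - mtsfCondExp G q π X)) /
    (∑ R ∈ rootSets G π, mtsfWeight G q π R)

/-- The connected component of `v` in `(V, φE)` is a rooted tree (acyclic and
containing a root). -/
def IsTreePart (φE : Finset (V × V)) (R : Finset V) (v : V) : Prop :=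
  compAcyclic (subgraphOf φE) v ∧ ∃ r ∈ R, (subgraphOf φE).Reachable v r

/-- The root of the connected component of `v` (an arbitrary root reachable
from `v`; in an MTSF whose component at `v` is a tree, it is the unique one). -/
noncomputable def rootOf (φE : Finset (V × V)) (R : Finset V) (v : V) : V :=
  if h : ∃ r, r ∈ R ∧ (subgraphOf φE).Reachable v r then h.choose else v

/-- The estimator `f̃`: propagate the value of `g` at the root of the tree of `v`
along the unique path; `0` on unicycle components. -/
noncomputable def ftil (G : MagGraph V) (φE : Finset (V × V)) (R : Finset V)
    (g : V → ℂ) (v : V) : ℂ :=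
  if IsTreePart φE R v then
    psi G (subgraphOf φE) (rootOf φE R v) v * g (rootOf φE R v)
  else 0

/-- `h(u) = (Σ_{x ∈ T_u} q_x ψ_{x→u} g(x)) / (Σ_{x ∈ T_u} q_x)` where `T_u` is the
component of `u`. -/
noncomputable def hfun [Fintype V] (G : MagGraph V) (q : V → ℝ) (φE : Finset (V × V))
    (g : V → ℂ) (u : V) : ℂ :=
  (∑ x ∈ compFinset (subgraphOf φE) u, ((q x : ℝ) : ℂ) * psi G (subgraphOf φE) x u * g x) /
    (∑ x ∈ compFinset (subgraphOf φE) u, ((q x : ℝ) : ℂ))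

/-- The Rao–Blackwellized estimator `f̄`. -/
noncomputable def fbar [Fintype V] (G : MagGraph V) (q : V → ℝ) (φE : Finset (V × V))
    (R : Finset V) (g : V → ℂ) (v : V) : ℂ :=
  if IsTreePart φE R v then
    psi G (subgraphOf φE) (rootOf φE R v) v * hfun G q φE g (rootOf φE R v)
  else 0

/-- The diagonal matrix `Q` of the parameters `q_v`. -/
noncomputable def Qmat [Fintype V] [DecidableEq V] (q : V → ℝ) : Matrix V V ℂ :=
  Matrix.diagonal fun v => ((q v : ℝ) : ℂ)

/-- The Tikhonov-smoothed signal `f_o = (L + Q)⁻¹ Q g`. -/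
noncomputable def fOpt [Fintype V] [DecidableEq V] (G : MagGraph V) (q : V → ℝ)
    (g : V → ℂ) : V → ℂ :=
  ((magLap G + Qmat q)⁻¹ * Qmat q).mulVec g


/-!
The quadratic form of the magnetic Laplacian is the energy `Σ_e w_e |f(e₂) - e^{iθ_e} f(e₁)|²`.
It vanishes only on sections that are parallel for the connection, i.e. satisfy
`f(b) = e^{iθ_p} f(a)` along every walk `p` from `a` to `b`. Transporting around a closed walk
with holonomy `e^{iθ_C} ≠ 1` gives `f(u) = e^{iθ_C} f(u)`, so `f(u) = 0`, and by connectedness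
`f = 0`. Hence the Hermitian matrix `L` is positive definite, and in particular injective.
-/

open ComplexConjugate

lemma Complex.conj_exp_I_mul_ofReal (t : ℝ) :
    conj (Complex.exp (Complex.I * t)) = Complex.exp (Complex.I * ((-t : ℝ) : ℂ)) := by
  rw [← Complex.exp_conj, map_mul, Complex.conj_I, Complex.conj_ofReal, Complex.ofReal_neg,
    neg_mul, mul_neg]

lemma Complex.conj_mul_sub_add_conj_mul_sub {z : ℂ} (hz : ‖z‖ = 1) (a b : ℂ) :
    conj a * (a - conj z * b) + conj b * (b - z * a) = Complex.normSq (b - z * a) := by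
  have hz' : conj z * z = 1 := by rw [Complex.conj_mul', hz]; norm_num
  rw [Complex.normSq_eq_conj_mul_self, map_sub, map_mul]
  linear_combination (-(conj a * a)) * hz'

namespace MagGraph

variable (G : MagGraph V)

lemma wSym_self (u : V) : G.wSym u u = 0 := by
  have h : (u, u) ∉ G.edges := fun h => G.noLoops _ h rfl
  simp [wSym, h]

lemma wSym_comm (u v : V) : G.wSym u v = G.wSym v u := by
  unfold wSym
  by_cases h : (u, v) ∈ G.edges
  · simp [h, G.oneOrient _ h]
  · by_cases h' : (v, u) ∈ G.edges <;> simp [h, h']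

lemma θSym_comm (u v : V) : G.θSym u v = -G.θSym v u := by
  unfold θSym
  by_cases h : (u, v) ∈ G.edges
  · simp [h, G.oneOrient _ h]
  · by_cases h' : (v, u) ∈ G.edges <;> simp [h, h']

lemma θSym_of_mem {e : V × V} (he : e ∈ G.edges) : G.θSym e.1 e.2 = G.θ e := by
  simp [θSym, he]

lemma θSym_swap_of_mem {e : V × V} (he : e ∈ G.edges) : G.θSym e.2 e.1 = -G.θ e := by
  rw [θSym_comm, θSym_of_mem G he]

lemma wSym_eq_sum (u v : V) :
    G.wSym u v = ∑ e ∈ G.edges,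
      ((if e = (u, v) then G.w e else 0) + (if e = (v, u) then G.w e else 0)) := by
  rw [Finset.sum_add_distrib, Finset.sum_ite_eq', Finset.sum_ite_eq']
  unfold wSym
  by_cases h : (u, v) ∈ G.edges
  · simp [h, G.oneOrient _ h]
  · simp [h]

lemma sum_wSym_mul [Fintype V] (F : V → V → ℂ) :
    ∑ u, ∑ v, (G.wSym u v : ℂ) * F u v = ∑ e ∈ G.edges, (G.w e : ℂ) * (F e.1 e.2 + F e.2 e.1) := by
  simp_rw [wSym_eq_sum, Complex.ofReal_sum, Finset.sum_mul]
  simp_rw [Finset.sum_comm (s := Finset.univ) (t := G.edges)]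
  refine Finset.sum_congr rfl fun e _ => ?_
  simp [apply_ite Complex.ofReal, add_mul, Finset.sum_add_distrib, Prod.ext_iff, ite_and, mul_add]

noncomputable def energy (f : V → ℂ) : ℝ :=
  ∑ e ∈ G.edges, G.w e * Complex.normSq (f e.2 - Complex.exp (Complex.I * G.θ e) * f e.1)

lemma energy_nonneg (f : V → ℂ) : 0 ≤ G.energy f :=
  Finset.sum_nonneg fun e he => mul_nonneg (G.wPos e he).le (Complex.normSq_nonneg _)

lemma energy_eq_zero_iff (f : V → ℂ) :
    G.energy f = 0 ↔ ∀ e ∈ G.edges, f e.2 = Complex.exp (Complex.I * G.θ e) * f e.1 := by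
  rw [energy, Finset.sum_eq_zero_iff_of_nonneg fun e he =>
    mul_nonneg (G.wPos e he).le (Complex.normSq_nonneg _)]
  refine forall₂_congr fun e he => ?_
  rw [mul_eq_zero, or_iff_right (G.wPos e he).ne', Complex.normSq_eq_zero, sub_eq_zero]

def IsParallel (H : SimpleGraph V) (f : V → ℂ) : Prop :=
  ∀ ⦃a b : V⦄, H.Adj a b → f b = Complex.exp (Complex.I * G.θSym a b) * f a

lemma isParallel_of_energy_eq_zero {f : V → ℂ} (hf : G.energy f = 0) :
    G.IsParallel (subgraphOf G.edges) f := by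
  have hedge := (G.energy_eq_zero_iff f).mp hf
  rintro a b ⟨-, hab | hba⟩
  · rw [hedge _ hab, ← G.θSym_of_mem hab]
  · rw [hedge _ hba, G.θSym_swap_of_mem hba, ← mul_assoc, ← Complex.exp_add]
    simp

variable {G}

lemma IsParallel.eq_exp_walkθ_mul {H : SimpleGraph V} {f : V → ℂ} (hf : G.IsParallel H f)
    {a b : V} (p : H.Walk a b) : f b = Complex.exp (Complex.I * walkθ G p) * f a := by
  induction p with
  | nil => simp [walkθ]
  | @cons x y z hxy p ih =>
    have hθ : walkθ G (.cons hxy p) = G.θSym x y + walkθ G p := by simp [walkθ]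
    rw [ih, hf hxy, hθ, ← mul_assoc, ← Complex.exp_add, Complex.ofReal_add, mul_add, add_comm]

lemma IsParallel.eq_zero {H : SimpleGraph V} {f : V → ℂ} (hf : G.IsParallel H f)
    (hH : H.Connected) {u : V} (c : H.Walk u u)
    (hc : Complex.exp (Complex.I * walkθ G c) ≠ 1) : f = 0 := by
  have hu : f u = 0 := by
    have hloop := hf.eq_exp_walkθ_mul c
    rw [← sub_eq_zero, ← one_sub_mul] at hloop
    exact (mul_eq_zero.mp hloop).resolve_left (sub_ne_zero.mpr hc.symm)
  funext v
  obtain ⟨p⟩ := hH.preconnected u v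
  rw [hf.eq_exp_walkθ_mul p, hu, mul_zero, Pi.zero_apply]

end MagGraph

section magLap

variable [Fintype V] [DecidableEq V] (G : MagGraph V)

lemma magLap_apply (u v : V) :
    magLap G u v = (if u = v then ∑ x, (G.wSym u x : ℂ) else 0)
      - G.wSym u v * Complex.exp (Complex.I * G.θSym v u) := by
  by_cases h : u = v
  · subst h
    simp [magLap, G.wSym_self]
  · simp [magLap, h]

lemma magLap_isHermitian : (magLap G).IsHermitian := by
  ext u v
  rw [Matrix.conjTranspose_apply, magLap_apply, magLap_apply, RCLike.star_def, map_sub,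
    map_mul, Complex.conj_ofReal, Complex.conj_exp_I_mul_ofReal, ← G.θSym_comm, G.wSym_comm]
  by_cases h : u = v
  · subst h
    simp
  · simp [h, Ne.symm h]

lemma magLap_mulVec_apply (f : V → ℂ) (u : V) :
    (magLap G *ᵥ f) u = ∑ v, G.wSym u v * (f u - Complex.exp (Complex.I * G.θSym v u) * f v) := by
  simp only [Matrix.mulVec, dotProduct, magLap_apply, sub_mul, ite_mul, zero_mul,
    Finset.sum_sub_distrib, Finset.sum_ite_eq, Finset.mem_univ, if_true, Finset.sum_mul, mul_sub,
    mul_assoc]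

lemma star_dotProduct_magLap_mulVec (f : V → ℂ) :
    star f ⬝ᵥ (magLap G *ᵥ f) = G.energy f := by
  have hrow : star f ⬝ᵥ (magLap G *ᵥ f) = ∑ u, ∑ v, (G.wSym u v : ℂ) *
      (conj (f u) * (f u - Complex.exp (Complex.I * G.θSym v u) * f v)) := by
    simp only [dotProduct, magLap_mulVec_apply, Finset.mul_sum, Pi.star_apply, RCLike.star_def]
    exact Finset.sum_congr rfl fun u _ => Finset.sum_congr rfl fun v _ => by ring
  rw [hrow, G.sum_wSym_mul, MagGraph.energy, Complex.ofReal_sum]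
  refine Finset.sum_congr rfl fun e he => ?_
  rw [G.θSym_swap_of_mem he, G.θSym_of_mem he, ← Complex.conj_exp_I_mul_ofReal,
    Complex.conj_mul_sub_add_conj_mul_sub (Complex.norm_exp_I_mul_ofReal _), Complex.ofReal_mul]

end magLap

/-- if `G` is connected and the unitary connection is nontrivial
(there is a cycle `C` with `e^{i θ_C} ≠ 1`), then the magnetic Laplacian has a
trivial kernel: `L f = 0 → f = 0`, and `L` is positive definite. -/
theorem magLap_posDef_of_nontrivial_connection {V : Type u} [Fintype V] [DecidableEq V]
    (G : MagGraph V) (hconn : (subgraphOf G.edges).Connected)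
    (hnontriv : ∃ (u : V) (c : (subgraphOf G.edges).Walk u u), c.IsCycle ∧
      Complex.exp (Complex.I * ((walkθ G c : ℝ) : ℂ)) ≠ 1) :
    (∀ f : V → ℂ, (magLap G).mulVec f = 0 → f = 0) ∧ (magLap G).PosDef := by
  have hpos : (magLap G).PosDef := by
    refine Matrix.PosDef.of_dotProduct_mulVec_pos (magLap_isHermitian G) fun f hf => ?_
    rw [star_dotProduct_magLap_mulVec, Complex.zero_lt_real]
    refine (G.energy_nonneg f).lt_of_ne fun h => hf ?_
    obtain ⟨u, c, -, hc⟩ := hnontriv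
    exact (G.isParallel_of_energy_eq_zero h.symm).eq_zero hconn c hc
  refine ⟨fun f hf => Matrix.mulVec_injective_iff_isUnit.mpr hpos.isUnit ?_, hpos⟩
  rw [hf, Matrix.mulVec_zero]
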